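/- arXiv:1212.2306 — 4 statements merged into one kernel-verified Lean document; each statement's English description precedes it below -/
import Mathlib

section
/- Let G be a connected simple graph and k a positive integer. Every k-isthmus I of G is contained in at least one k-block of G; in particular, no k-isthmus is an isolated vertex of the k-isthmus graph T_k. -/
/-- `I` is a `k`-isthmus of the induced subgraph `G[S]`: `I ⊆ S`, `I` carries a path
structure on `k` vertices (consecutive vertices adjacent in `G`), and `S \ I`
partitions into nonempty sets `X` and `Y` such that no path inside `G[S \ I]`
connects `X` to `Y` (every path from `X` to `Y` passes through `I`). -/
def IsKIsthmusOn {V : Type*} (G : SimpleGraph V) (S : Set V) (k : ℕ) (I : Set V) : Prop :=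
  I ⊆ S ∧
  (∃ l : List V, l.Nodup ∧ l.length = k ∧ {x | x ∈ l} = I ∧ l.Chain' G.Adj) ∧
  ∃ X Y : Set V, X.Nonempty ∧ Y.Nonempty ∧ Disjoint X Y ∧ X ∪ Y = S \ I ∧
    ∀ x y : ↥(S \ I), ↑x ∈ X → ↑y ∈ Y → ¬ (G.induce (S \ I)).Reachable x y

/-- `B` is a `k`-block of `G`: `G[B]` is connected, has no `k`-isthmus of itself,
and `B` is maximal with these two properties. -/
def IsKBlock {V : Type*} (G : SimpleGraph V) (k : ℕ) (B : Set V) : Prop :=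
  (G.induce B).Connected ∧ (∀ I, ¬ IsKIsthmusOn G B k I) ∧
  ∀ B' : Set V, B ⊆ B' → (G.induce B').Connected → (∀ I, ¬ IsKIsthmusOn G B' k I) → B' = B


/-- The `k`-isthmus graph of `G`: vertices are the `k`-blocks and the `k`-isthmuses
of `G`, a block `B` and an isthmus `I` being adjacent iff `I ⊆ B`. -/
def isthmusGraph {V : Type*} (G : SimpleGraph V) (k : ℕ) :
    SimpleGraph ({B : Set V // IsKBlock G k B} ⊕ {I : Set V // IsKIsthmusOn G Set.univ k I}) :=
  SimpleGraph.fromRel (fun u w =>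
    match u, w with
    | Sum.inl B, Sum.inr I => I.1 ⊆ B.1
    | Sum.inr I, Sum.inl B => I.1 ⊆ B.1
    | _, _ => False)
/-!
The isthmus `I` is itself a connected vertex set (it carries a path), and `G[I]` has no
`k`-isthmus, since a `k`-isthmus of `G[S]` leaves vertices of `S` outside it, so `S` has more
than `k` vertices. In a finite graph every such set extends to a maximal one, i.e. to a `k`-block.
-/

namespace SimpleGraph

variable {V : Type*} {G : SimpleGraph V}

lemma connected_induce_of_isChain {l : List V} (hne : l ≠ []) (h : l.IsChain G.Adj) :
    (G.induce {x | x ∈ l}).Connected :=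
  Walk.support_ofSupport hne h ▸ (Walk.ofSupport l hne h).connected_induce_support

end SimpleGraph

namespace IsKIsthmusOn

variable {V : Type*} {G : SimpleGraph V} {S I : Set V} {k : ℕ}

lemma ncard_eq (hI : IsKIsthmusOn G S k I) : I.ncard = k := by
  classical
  obtain ⟨-, ⟨l, hnd, rfl, rfl, -⟩, -⟩ := hI
  rw [← List.coe_toFinset, Set.ncard_coe_finset, List.toFinset_card_of_nodup hnd]

lemma connected_induce (hI : IsKIsthmusOn G S k I) (hk : 0 < k) : (G.induce I).Connected := by
  obtain ⟨-, ⟨l, -, rfl, rfl, hchain⟩, -⟩ := hI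
  exact SimpleGraph.connected_induce_of_isChain (List.ne_nil_of_length_pos hk) hchain

lemma ssubset (hI : IsKIsthmusOn G S k I) : I ⊂ S := by
  obtain ⟨hIS, -, X, Y, ⟨x, hx⟩, -, -, hXY, -⟩ := hI
  have hxS : x ∈ S \ I := hXY ▸ Or.inl hx
  exact Set.ssubset_iff_of_subset hIS |>.mpr ⟨x, hxS⟩

lemma lt_ncard (hI : IsKIsthmusOn G S k I) (hS : S.Finite) : k < S.ncard :=
  hI.ncard_eq ▸ Set.ncard_lt_ncard hI.ssubset hS

end IsKIsthmusOn

lemma exists_isKBlock_superset {V : Type*} [Finite V] {G : SimpleGraph V} {k : ℕ} {C : Set V}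
    (hconn : (G.induce C).Connected) (hfree : ∀ J, ¬ IsKIsthmusOn G C k J) :
    ∃ B, IsKBlock G k B ∧ C ⊆ B := by
  obtain ⟨B, hCB, hmax⟩ := Finite.exists_le_maximal
    (p := fun B : Set V => (G.induce B).Connected ∧ ∀ J, ¬ IsKIsthmusOn G B k J) ⟨hconn, hfree⟩
  exact ⟨B, ⟨hmax.prop.1, hmax.prop.2, fun B' hBB' hconn' hfree' =>
    (hmax.le_of_ge ⟨hconn', hfree'⟩ hBB').antisymm hBB'⟩, hCB⟩

theorem isthmus_in_block_general {V : Type*} [Fintype V]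
    (G : SimpleGraph V) (k : ℕ) (hk : 0 < k) :
    (∀ I : Set V, IsKIsthmusOn G Set.univ k I → ∃ B : Set V, IsKBlock G k B ∧ I ⊆ B) ∧
    (∀ I : {I : Set V // IsKIsthmusOn G Set.univ k I},
      ∃ B : {B : Set V // IsKBlock G k B}, (isthmusGraph G k).Adj (Sum.inr I) (Sum.inl B)) := by
  have in_block : ∀ I : Set V, IsKIsthmusOn G Set.univ k I → ∃ B, IsKBlock G k B ∧ I ⊆ B :=
    fun I hI => exists_isKBlock_superset (hI.connected_induce hk)
      fun J hJ => (hJ.lt_ncard I.toFinite).ne hI.ncard_eq.symm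
  refine ⟨in_block, fun ⟨I, hI⟩ => ?_⟩
  obtain ⟨B, hB, hIB⟩ := in_block I hI
  exact ⟨⟨B, hB⟩, by simp [isthmusGraph, hIB]⟩

/-- Every `k`-isthmus of `G` is contained in a `k`-block; in particular no
`k`-isthmus is isolated in the `k`-isthmus graph. -/
theorem isthmus_in_block {V : Type*} [Fintype V]
    (G : SimpleGraph V) (hG : G.Connected) (k : ℕ) (hk : 0 < k) :
    (∀ I : Set V, IsKIsthmusOn G Set.univ k I → ∃ B : Set V, IsKBlock G k B ∧ I ⊆ B) ∧
    (∀ I : {I : Set V // IsKIsthmusOn G Set.univ k I},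
      ∃ B : {B : Set V // IsKBlock G k B}, (isthmusGraph G k).Adj (Sum.inr I) (Sum.inl B)) :=
  isthmus_in_block_general G k hk
end

section
/- Let (G_A, G_M) be an ordered pair of simple graphs, {s,t} an edge of G_M, and f an arrangement of (G_A, G_M) such that |f⁻¹({s,t})| ≥ 2 and G_A[f⁻¹({s,t})] is connected. Then f is t-equivalent, in the sense of AAP transfers, to the arrangement g given by g(x) = t if f(x) ∈ {s,t} and g(x) = f(x) otherwise. -/
/-!
If `f⁻¹(s)` is empty there is nothing to do. If `f⁻¹(t)` is nonempty, a single transfer of the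
whole of `f⁻¹(s)` merges the two countries. Otherwise `f⁻¹(s) = f⁻¹({s,t})` has at least two
agents and induces a connected graph, so it has a non-cut vertex `v` (a leaf of a spanning tree);
transferring `f⁻¹(s) \ {v}` first makes `f⁻¹(t)` nonempty, and `v` then follows.
-/

/-- An arrangement of agents (vertices of `GA`) into countries (vertices of `GM`):
every nonempty preimage induces a connected subgraph of `GA`. -/
def IsArrangement {A M : Type*} (GA : SimpleGraph A) (f : A → M) : Prop :=
  ∀ c : M, (f ⁻¹' {c}).Nonempty → (GA.induce (f ⁻¹' {c})).Connected

/-- An AAP transfer: a set `U` of agents of country `s` is moved along an edge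
`st` of `GM` to country `t`; each of `GA[U]`, `GA[f⁻¹(s) \ U]`, `GA[f⁻¹(t) ∪ U]`
is connected or empty, and `f⁻¹({s,t}) \ U ≠ ∅`. -/
def Transfer {A M : Type*} (GA : SimpleGraph A) (GM : SimpleGraph M)
    (f g : A → M) : Prop :=
  ∃ (s t : M) (U : Set A), GM.Adj s t ∧ U ⊆ f ⁻¹' {s} ∧
    (U = ∅ ∨ (GA.induce U).Connected) ∧
    (f ⁻¹' {s} \ U = ∅ ∨ (GA.induce (f ⁻¹' {s} \ U)).Connected) ∧
    (f ⁻¹' {t} ∪ U = ∅ ∨ (GA.induce (f ⁻¹' {t} ∪ U)).Connected) ∧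
    (f ⁻¹' {s, t} \ U).Nonempty ∧
    (∀ x ∈ U, g x = t) ∧ (∀ x, x ∉ U → g x = f x)

/-- t-equivalence: related by a finite sequence of transfers. -/
def TEquiv {A M : Type*} (GA : SimpleGraph A) (GM : SimpleGraph M)
    (f g : A → M) : Prop :=
  Relation.ReflTransGen (Transfer GA GM) f g

/-- A SUBNET MERGER along an edge `st` of `GM`: all agents of `s` are merged into
country `t`, where `f⁻¹(s) ≠ ∅`, `|f⁻¹({s,t})| ≥ 2` and `GA[f⁻¹({s,t})]` is
connected. -/
def SubnetMerger {A M : Type*} (GA : SimpleGraph A) (GM : SimpleGraph M)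
    (f g : A → M) : Prop :=
  ∃ s t : M, GM.Adj s t ∧ (f ⁻¹' {s}).Nonempty ∧
    2 ≤ (f ⁻¹' ({s, t} : Set M)).ncard ∧
    (GA.induce (f ⁻¹' ({s, t} : Set M))).Connected ∧
    (∀ x, f x ∈ ({s, t} : Set M) → g x = t) ∧
    (∀ x, f x ∉ ({s, t} : Set M) → g x = f x)

/-- The number of pebbles of the configuration associated with an arrangement:
the number of countries holding at least two agents. -/
noncomputable def pebCount {A M : Type*} (f : A → M) : ℕ :=
  {c : M | 2 ≤ (f ⁻¹' {c}).ncard}.ncard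

/-- `g` is an `f`-irreducible arrangement: it is t-equivalent to `f` and its
associated configuration has the minimum possible number of pebbles. -/
def IsIrreducibleFor {A M : Type*} (GA : SimpleGraph A) (GM : SimpleGraph M)
    (f g : A → M) : Prop :=
  TEquiv GA GM f g ∧ ∀ h : A → M, TEquiv GA GM f h → pebCount g ≤ pebCount h

open Set

namespace SimpleGraph

variable {V : Type*} {G : SimpleGraph V}

lemma Connected.induce_diff_singleton_of_induce_compl {S : Set V} {v : S}
    (h : ((G.induce S).induce {v}ᶜ).Connected) : (G.induce (S \ {(v : V)})).Connected :=
  h.map ⟨fun x => ⟨x.1.1, x.1.2, fun hx => x.2 (Subtype.ext hx)⟩, id⟩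
    fun x => ⟨⟨⟨x.1, x.2.1⟩, fun hx => x.2.2 (congrArg Subtype.val hx)⟩, rfl⟩

lemma Connected.exists_mem_connected_induce_diff_singleton {S : Set V}
    (hS : (G.induce S).Connected) (hcard : 1 < S.ncard) :
    ∃ v ∈ S, (G.induce (S \ {v})).Connected := by
  have : Finite S := (finite_of_ncard_pos (by omega)).to_subtype
  have : Nontrivial S := (one_lt_ncard_iff_nontrivial.mp hcard).coe_sort
  obtain ⟨v, hv⟩ := hS.exists_connected_induce_compl_singleton_of_finite_nontrivial
  exact ⟨v, v.2, hv.induce_diff_singleton_of_induce_compl⟩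

lemma connected_induce_singleton (v : V) : (G.induce {v}).Connected := by
  rw [induce_singleton_eq_top]
  exact connected_top

end SimpleGraph

section

variable {A M : Type*} {GA : SimpleGraph A} {GM : SimpleGraph M}

open Classical in
noncomputable def moveTo (f : A → M) (U : Set A) (t : M) : A → M :=
  fun x => if x ∈ U then t else f x

variable {f : A → M} {U V : Set A} {s t c : M}

lemma moveTo_empty (f : A → M) (t : M) : moveTo f ∅ t = f :=
  funext fun x => if_neg (notMem_empty x)

lemma moveTo_moveTo : moveTo (moveTo f U t) V t = moveTo f (U ∪ V) t := by
  funext x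
  by_cases hU : x ∈ U <;> by_cases hV : x ∈ V <;> simp [moveTo, hU, hV]

lemma preimage_moveTo_singleton_of_ne (hc : c ≠ t) :
    moveTo f U t ⁻¹' {c} = f ⁻¹' {c} \ U := by
  ext x
  by_cases hx : x ∈ U <;> simp [moveTo, hx, Ne.symm hc]

lemma preimage_moveTo_singleton_self : moveTo f U t ⁻¹' {t} = f ⁻¹' {t} ∪ U := by
  ext x
  by_cases hx : x ∈ U <;> simp [moveTo, hx]

lemma preimage_moveTo_pair (hU : U ⊆ f ⁻¹' {s}) :
    moveTo f U t ⁻¹' {s, t} = f ⁻¹' {s, t} := by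
  ext x
  by_cases hx : x ∈ U
  · simp [moveTo, hx, show f x = s from hU hx]
  · simp [moveTo, hx]

lemma transfer_moveTo (hst : GM.Adj s t) (hU : U ⊆ f ⁻¹' {s})
    (hUconn : U = ∅ ∨ (GA.induce U).Connected)
    (hrest : f ⁻¹' {s} \ U = ∅ ∨ (GA.induce (f ⁻¹' {s} \ U)).Connected)
    (hnew : f ⁻¹' {t} ∪ U = ∅ ∨ (GA.induce (f ⁻¹' {t} ∪ U)).Connected)
    (hleft : (f ⁻¹' {s, t} \ U).Nonempty) :
    Transfer GA GM f (moveTo f U t) :=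
  ⟨s, t, U, hst, hU, hUconn, hrest, hnew, hleft, fun _ hx => if_pos hx, fun _ hx => if_neg hx⟩

lemma transfer_moveTo_preimage (hst : GM.Adj s t) (hs : (GA.induce (f ⁻¹' {s})).Connected)
    (ht : (f ⁻¹' {t}).Nonempty) (hconn : (GA.induce (f ⁻¹' {s, t})).Connected) :
    Transfer GA GM f (moveTo f (f ⁻¹' {s}) t) := by
  have hunion : f ⁻¹' {t} ∪ f ⁻¹' {s} = f ⁻¹' {s, t} := by
    rw [union_comm, ← preimage_union, insert_eq]
  refine transfer_moveTo hst subset_rfl (.inr hs) (.inl Set.sdiff_self) (.inr (hunion ▸ hconn)) ?_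
  obtain ⟨x, hx⟩ := ht
  exact ⟨x, .inr hx, fun hxs => hst.ne (hxs.symm.trans hx)⟩

lemma tEquiv_moveTo_preimage (hst : GM.Adj s t) (hs : (GA.induce (f ⁻¹' {s})).Connected)
    (hcard : 2 ≤ (f ⁻¹' {s, t}).ncard) (hconn : (GA.induce (f ⁻¹' {s, t})).Connected) :
    TEquiv GA GM f (moveTo f (f ⁻¹' {s}) t) := by
  rcases (f ⁻¹' {t}).eq_empty_or_nonempty with ht | ht
  · have hs_eq : f ⁻¹' {s} = f ⁻¹' {s, t} := by
      rw [insert_eq, preimage_union, ht, union_empty]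
    have hcard_s : 1 < (f ⁻¹' {s}).ncard := by rw [hs_eq]; omega
    obtain ⟨v, hv, hvconn⟩ := hs.exists_mem_connected_induce_diff_singleton hcard_s
    set U := f ⁻¹' {s} \ {v}
    have hvU : f ⁻¹' {s} \ U = {v} := sdiff_sdiff_cancel_left (singleton_subset_iff.mpr hv)
    have hUne : U.Nonempty := by
      obtain ⟨w, hw, hwv⟩ := exists_ne_of_one_lt_ncard hcard_s v
      exact ⟨w, hw, hwv⟩
    have first : Transfer GA GM f (moveTo f U t) := by
      refine transfer_moveTo hst Set.sdiff_subset (.inr hvconn)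
        (.inr (hvU ▸ GA.connected_induce_singleton v)) (.inr (by rwa [ht, empty_union])) ?_
      exact ⟨v, by rw [← hs_eq, hvU]; rfl⟩
    have hs₁ : moveTo f U t ⁻¹' {s} = {v} := by
      rw [preimage_moveTo_singleton_of_ne hst.ne, hvU]
    have second := transfer_moveTo_preimage (f := moveTo f U t) hst
      (by rw [hs₁]; exact GA.connected_induce_singleton v)
      (by rw [preimage_moveTo_singleton_self, ht, empty_union]; exact hUne)
      (by rwa [preimage_moveTo_pair Set.sdiff_subset])
    rw [hs₁, moveTo_moveTo, Set.sdiff_union_of_subset (singleton_subset_iff.mpr hv)] at second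
    exact .head first (.single second)
  · exact .single (transfer_moveTo_preimage hst hs ht hconn)

end

theorem merger_tEquiv_general {A M : Type*}
    (GA : SimpleGraph A) (GM : SimpleGraph M)
    (f g : A → M) (hf : IsArrangement GA f)
    (s t : M) (hst : GM.Adj s t)
    (h2 : 2 ≤ (f ⁻¹' ({s, t} : Set M)).ncard)
    (hconn : (GA.induce (f ⁻¹' ({s, t} : Set M))).Connected)
    (hg1 : ∀ x, f x ∈ ({s, t} : Set M) → g x = t)
    (hg2 : ∀ x, f x ∉ ({s, t} : Set M) → g x = f x) :
    TEquiv GA GM f g := by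
  have hg : g = moveTo f (f ⁻¹' {s}) t := by
    funext x
    by_cases hx : f x = s
    · simp [moveTo, hx, hg1 x (.inl hx)]
    · by_cases hxt : f x = t
      · simp [moveTo, hxt, hg1 x (.inr hxt)]
      · simp [moveTo, hx, hg2 x (by simp [hx, hxt])]
  subst hg
  rcases (f ⁻¹' {s}).eq_empty_or_nonempty with hs | hs
  · rw [hs, moveTo_empty]
    exact .refl
  · exact tEquiv_moveTo_preimage hst (hf s hs) h2 hconn

/-- Lemma 4: if `|f⁻¹({s,t})| ≥ 2` and `GA[f⁻¹({s,t})]` is connected, then `f` is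
t-equivalent to the arrangement sending everything of `s` and `t` to `t`. -/
theorem merger_tEquiv {A M : Type*} [Fintype A] [Fintype M]
    (GA : SimpleGraph A) (GM : SimpleGraph M)
    (f g : A → M) (hf : IsArrangement GA f)
    (s t : M) (hst : GM.Adj s t)
    (h2 : 2 ≤ (f ⁻¹' ({s, t} : Set M)).ncard)
    (hconn : (GA.induce (f ⁻¹' ({s, t} : Set M))).Connected)
    (hg1 : ∀ x, f x ∈ ({s, t} : Set M) → g x = t)
    (hg2 : ∀ x, f x ∉ ({s, t} : Set M) → g x = f x) :
    TEquiv GA GM f g :=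
  merger_tEquiv_general GA GM f g hf s t hst h2 hconn hg1 hg2
end

section
/- The Hamiltonian circuit problem restricted to simple undirected connected graphs H whose complement is also connected is NP-complete. In particular, for any graph G with at least 3 vertices and any vertex v of G, the graph H obtained by adding new vertices a, b, c with edges {v,a}, {a,b}, {b,c} and edges {c,x} for every neighbor x of v in G, satisfies: H has a Hamiltonian circuit if and only if G has a Hamiltonian circuit, and the complement of H is connected. -/
/-- The graph `H` of the reduction: `G` together with three new vertices `a,b,c`
(coded `Sum.inr 0`, `Sum.inr 1`, `Sum.inr 2`) and edges `{v,a}`, `{a,b}`, `{b,c}`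
and `{c,x}` for every neighbour `x` of `v` in `G`. -/
def extGraph {V : Type*} (G : SimpleGraph V) (v : V) : SimpleGraph (V ⊕ Fin 3) :=
  SimpleGraph.fromRel (fun u w =>
    match u, w with
    | Sum.inl x, Sum.inl y => G.Adj x y
    | Sum.inl x, Sum.inr i => (i = 0 ∧ x = v) ∨ (i = 2 ∧ G.Adj v x)
    | Sum.inr i, Sum.inl x => (i = 0 ∧ x = v) ∨ (i = 2 ∧ G.Adj v x)
    | Sum.inr i, Sum.inr j => (i = 0 ∧ j = 1) ∨ (i = 1 ∧ j = 2))

/-- A graph has a Hamiltonian circuit. -/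
def HasHamiltonianCircuit {W : Type*} [DecidableEq W] (H : SimpleGraph W) : Prop :=
  ∃ (u : W) (w : H.Walk u u), w.IsHamiltonianCycle

/-! In `extGraph G v` the vertices `b` and `a` have degree two, so a Hamiltonian circuit of it
runs `a, b, c, x, …, v, a` for some neighbour `x` of `v`; the part from `x` to `v` is a Hamiltonian
path of `G`, which the edge `v x` closes to a Hamiltonian circuit because `|V| ≥ 3`. Conversely, a
Hamiltonian circuit `v, x, …, v` of `G` becomes `c, x, …, v, a, b, c`. In the complement, `b` is
adjacent to every vertex of `G`, and `c` to `v` and to `a`, so it is connected. -/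

open SimpleGraph Walk Sum

namespace SimpleGraph.Walk

variable {α β : Type*} {G : SimpleGraph α} {G' : SimpleGraph β}

lemma exists_support_map_eq_of_forall_mem_range (f : G ↪g G') {u w : β} (q : G'.Walk u w)
    (hq : ∀ z ∈ q.support, z ∈ Set.range f) {x y : α} (hx : f x = u) (hy : f y = w) :
    ∃ p : G.Walk x y, p.support.map f = q.support := by
  induction q generalizing x with
  | nil =>
    subst hx
    obtain rfl := f.injective hy
    exact ⟨nil, rfl⟩
  | cons h q ih =>
    subst hx
    obtain ⟨t, rfl⟩ := hq _ (List.mem_cons_of_mem _ q.start_mem_support)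
    obtain ⟨p, hp⟩ := ih (fun z hz => hq z (List.mem_cons_of_mem _ hz)) rfl hy
    exact ⟨cons (f.map_adj_iff.1 h) p, by simp [← hp]⟩

variable [DecidableEq α] {u w x y : α}

lemma IsHamiltonianCycle.reverse {C : G.Walk u u} (hC : C.IsHamiltonianCycle) :
    C.reverse.IsHamiltonianCycle := by
  have := hC.finite
  cases nonempty_fintype α
  rw [isHamiltonianCycle_iff_isCycle_and_length_eq] at hC ⊢
  exact ⟨hC.1.reverse, by rw [length_reverse, hC.2]⟩

lemma IsHamiltonianCycle.exists_snd_eq {C : G.Walk u u} (hC : C.IsHamiltonianCycle)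
    (hu : ∀ z, G.Adj u z → z = x ∨ z = y) :
    ∃ C' : G.Walk u u, C'.IsHamiltonianCycle ∧ C'.snd = x := by
  rcases hu _ (C.adj_snd hC.not_nil) with h | h
  · exact ⟨C, hC, h⟩
  refine ⟨C.reverse, hC.reverse, ?_⟩
  rw [snd_reverse]
  refine (hu _ (C.adj_penultimate hC.not_nil).symm).resolve_right fun h' => ?_
  exact hC.isCycle.snd_ne_penultimate (h.trans h'.symm)

lemma IsHamiltonianCycle.isHamiltonian_of_cons {h : G.Adj u w} {p : G.Walk w u}
    (hC : (cons h p).IsHamiltonianCycle) : p.IsHamiltonian :=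
  (isHamiltonianCycle_iff_isCycle_and_support_count_tail_eq_one.1 hC).2

lemma isHamiltonianCycle_cons [Fintype α] (hα : 3 ≤ Fintype.card α) (h : G.Adj u w)
    {p : G.Walk w u} (hp : p.IsHamiltonian) : (cons h p).IsHamiltonianCycle := by
  refine isHamiltonianCycle_iff_isCycle_and_support_count_tail_eq_one.2
    ⟨(cons_isCycle_iff p h).2 ⟨hp.isPath, fun he => ?_⟩, hp⟩
  have := hp.isPath.length_eq_one_of_mem_edges (Sym2.eq_swap ▸ he)
  have := hp.length_eq
  omega

end SimpleGraph.Walk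

section

variable {α : Type*} [DecidableEq α] {G : SimpleGraph α}

lemma HasHamiltonianCircuit.exists_adj_isHamiltonian (hG : HasHamiltonianCircuit G) (u : α) :
    ∃ w, G.Adj u w ∧ ∃ p : G.Walk w u, p.IsHamiltonian := by
  obtain ⟨u', C, hC⟩ := hG
  have hC' := hC.rotate (hC.mem_support u)
  obtain ⟨w, h, p, hp⟩ := not_nil_iff.1 hC'.not_nil
  rw [hp] at hC'
  exact ⟨w, h, p, hC'.isHamiltonian_of_cons⟩

lemma hasHamiltonianCircuit_of_isHamiltonian [Fintype α] (hα : 3 ≤ Fintype.card α) {u w : α}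
    (h : G.Adj u w) {p : G.Walk w u} (hp : p.IsHamiltonian) : HasHamiltonianCircuit G :=
  ⟨u, cons h p, isHamiltonianCycle_cons hα h hp⟩

end

namespace extGraph

variable {V : Type*} {G : SimpleGraph V} {v : V}

lemma adj_inl_inl {x y : V} : (extGraph G v).Adj (inl x) (inl y) ↔ G.Adj x y := by
  simp only [extGraph, fromRel_adj, G.adj_comm y x, or_self, and_iff_right_iff_imp]
  exact fun h => by simpa using h.ne

lemma adj_inr_zero {z : V ⊕ Fin 3} :
    (extGraph G v).Adj (inr 0) z ↔ z = inl v ∨ z = inr 1 := by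
  rcases z with x | i
  · simp [extGraph, eq_comm]
  · fin_cases i <;> simp [extGraph]

lemma adj_inr_one {z : V ⊕ Fin 3} :
    (extGraph G v).Adj (inr 1) z ↔ z = inr 0 ∨ z = inr 2 := by
  rcases z with x | i
  · simp [extGraph]
  · fin_cases i <;> simp [extGraph]

lemma adj_inr_two {z : V ⊕ Fin 3} :
    (extGraph G v).Adj (inr 2) z ↔ z = inr 1 ∨ ∃ x, G.Adj v x ∧ z = inl x := by
  rcases z with x | i
  · simp [extGraph]
  · fin_cases i <;> simp [extGraph]

variable (G v) in
def inlEmbedding : G ↪g extGraph G v := ⟨Function.Embedding.inl, adj_inl_inl⟩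

@[simp] lemma coe_inlEmbedding : ⇑(inlEmbedding G v) = inl := rfl

lemma compl_connected : (extGraph G v)ᶜ.Connected := by
  have hb : ∀ x, (extGraph G v)ᶜ.Adj (inr 1) (inl x) := fun x => by simp [adj_inr_one]
  have hcv : (extGraph G v)ᶜ.Adj (inr 2) (inl v) := by simp [adj_inr_two]
  have hca : (extGraph G v)ᶜ.Adj (inr 2) (inr 0) := by simp [adj_inr_two]
  have hreach : ∀ z, (extGraph G v)ᶜ.Reachable (inr 1) z := by
    rintro (x | i)
    · exact (hb x).reachable
    · fin_cases i
      · exact (hb v).reachable.trans (hcv.symm.reachable.trans hca.reachable)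
      · rfl
      · exact (hb v).reachable.trans hcv.symm.reachable
  exact (connected_iff_exists_forall_reachable _).2 ⟨_, hreach⟩

variable [DecidableEq V]

lemma hasHamiltonianCircuit_of_hasHamiltonianCircuit [Fintype V] (hG : HasHamiltonianCircuit G) :
    HasHamiltonianCircuit (extGraph G v) := by
  obtain ⟨x, hvx, p, hp⟩ := hG.exists_adj_isHamiltonian v
  -- endpoints spelled with `toHom`, so that `simp` sees the walk below as type-correct
  have hcx : (extGraph G v).Adj (inr 2) ((inlEmbedding G v).toHom x) :=
    adj_inr_two.2 (.inr ⟨x, hvx, rfl⟩)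
  have hva : (extGraph G v).Adj ((inlEmbedding G v).toHom v) (inr 0) :=
    (adj_inr_zero.2 (.inl rfl)).symm
  have hab : (extGraph G v).Adj (inr 0) (inr 1) := adj_inr_zero.2 (.inr rfl)
  refine hasHamiltonianCircuit_of_isHamiltonian (by simp) (adj_inr_one.2 (.inr rfl))
    (p := cons hcx (((p.map (inlEmbedding G v).toHom).concat hva).concat hab)) fun z => ?_
  simp only [support_cons, support_concat, Walk.support_map]
  rcases z with y | i
  · simp [List.count_map_of_injective _ _ inl_injective, hp y]
  · fin_cases i <;> simp [List.count_eq_zero]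

lemma exists_isPath_of_isHamiltonianCycle {C : (extGraph G v).Walk (inr 0) (inr 0)}
    (hC : C.IsHamiltonianCycle) (hsnd : C.snd = inr 1) :
    ∃ x, G.Adj v x ∧ ∃ T : (extGraph G v).Walk (inl v) (inl x),
      T.IsPath ∧ T.length + 4 = C.length ∧ ∀ z ∈ T.support, z ∈ Set.range inl := by
  -- peel `a, b, c, x` off the front and `a, v` off the back of `C`; every other choice of
  -- neighbour would repeat an edge or a vertex
  obtain ⟨_, hab, P, rfl⟩ := not_nil_iff.1 hC.not_nil
  rw [snd_cons] at hsnd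
  subst hsnd
  obtain ⟨hP, habP⟩ := (cons_isCycle_iff P hab).1 hC.isCycle
  obtain ⟨_, hbz, Q, rfl⟩ := not_nil_iff.1 (not_nil_of_ne (by simp) : ¬P.Nil)
  obtain ⟨hQ, hbQ⟩ := (cons_isPath_iff _ _).1 hP
  obtain rfl | rfl := adj_inr_one.1 hbz
  · simp at habP
  obtain ⟨_, hcw, R, rfl⟩ := not_nil_iff.1 (not_nil_of_ne (by simp) : ¬Q.Nil)
  obtain ⟨hR, hcR⟩ := (cons_isPath_iff _ _).1 hQ
  obtain rfl | ⟨x, hvx, rfl⟩ := adj_inr_two.1 hcw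
  · simp at hbQ
  obtain ⟨_, hau, T, hT⟩ := not_nil_iff.1 (not_nil_of_ne (by simp) : ¬R.reverse.Nil)
  have hRT : R.support.reverse = inr 0 :: T.support := by
    rw [← support_reverse, hT, support_cons]
  have hRrev := hR.reverse
  rw [hT] at hRrev
  obtain ⟨hTpath, haT⟩ := (cons_isPath_iff _ _).1 hRrev
  have hTR : ∀ z ∈ T.support, z ∈ R.support := fun z hz =>
    List.mem_reverse.1 (hRT ▸ List.mem_cons_of_mem _ hz)
  obtain rfl | rfl := adj_inr_zero.1 hau
  · refine ⟨x, hvx, T, hTpath, ?_, ?_⟩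
    · have := congrArg length hT
      simp only [length_reverse, length_cons] at this ⊢
      omega
    · rintro (y | i) hz
      · exact ⟨y, rfl⟩
      · fin_cases i
        · exact absurd hz haT
        · exact absurd (hTR _ hz) (by simpa using hbQ)
        · exact absurd (hTR _ hz) hcR
  · exact absurd (hTR _ T.start_mem_support) (by simpa using hbQ)

lemma _root_.HasHamiltonianCircuit.of_extGraph [Fintype V] (h3 : 3 ≤ Fintype.card V)
    (hH : HasHamiltonianCircuit (extGraph G v)) : HasHamiltonianCircuit G := by
  obtain ⟨u, C, hC⟩ := hH
  obtain ⟨C, hC, hsnd⟩ := (hC.rotate (hC.mem_support (inr 0))).exists_snd_eq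
    fun z hz => (adj_inr_zero.1 hz).symm
  obtain ⟨x, hvx, T, hT, hlen, hTrange⟩ := exists_isPath_of_isHamiltonianCycle hC hsnd
  obtain ⟨p, hp⟩ :=
    T.exists_support_map_eq_of_forall_mem_range (inlEmbedding G v) hTrange rfl rfl
  have hpath : p.IsPath := IsPath.mk' (List.Nodup.of_map _ (hp ▸ hT.support_nodup))
  have hplen : p.length = T.length := by
    simpa using congrArg List.length hp
  rw [hC.length_eq, Fintype.card_sum, Fintype.card_fin] at hlen
  exact hasHamiltonianCircuit_of_isHamiltonian h3 hvx.symm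
    (isHamiltonian_iff_isPath_and_length_eq.2 ⟨hpath, by omega⟩)

end extGraph

/-- The reduction for the restricted Hamiltonian circuit problem: `H = extGraph G v`
has a Hamiltonian circuit iff `G` does, and the complement of `H` is connected. -/
theorem restricted_hamiltonian_reduction {V : Type*} [Fintype V] [DecidableEq V]
    (G : SimpleGraph V) (h3 : 3 ≤ Fintype.card V) (v : V) :
    (HasHamiltonianCircuit (extGraph G v) ↔ HasHamiltonianCircuit G) ∧
    (extGraph G v)ᶜ.Connected :=
  ⟨⟨.of_extGraph h3, extGraph.hasHamiltonianCircuit_of_hasHamiltonianCircuit⟩,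
    extGraph.compl_connected⟩
end

section
/- Let G be a connected graph with n vertices, P a set of m < n labeled pebbles, k = n − m ≥ 1. For any configuration f, any pebble p ∈ P, the induced subgraph G[R(p,f)] on the reachable range of p is connected, and |R(p,f)| ≥ k + 1. -/
/-- A single pebble move: pebble `p` moves from `f p` to an adjacent vertex that is
unoccupied in `f`; all other pebbles stay in place. -/
def PebMove {V P : Type*} (G : SimpleGraph V) (f g : P ↪ V) : Prop :=
  ∃ p : P, G.Adj (f p) (g p) ∧ (∀ q : P, q ≠ p → g q = f q) ∧ ∀ q : P, f q ≠ g p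

/-- Two configurations are equivalent if one can be transformed into the other by a
finite sequence of moves. -/
def PebEquiv {V P : Type*} (G : SimpleGraph V) (f g : P ↪ V) : Prop :=
  Relation.ReflTransGen (PebMove G) f g

/-- The reachable range `R(p,f)`: all vertices pebble `p` can reach by sequences of
moves starting from configuration `f`. -/
def ReachSet {V P : Type*} (G : SimpleGraph V) (f : P ↪ V) (p : P) : Set V :=
  {v | ∃ g : P ↪ V, PebEquiv G f g ∧ g p = v}

/-! A single move displaces `p` along an edge or not at all, so the trajectory of `p` is a walk
inside `R(p,f)`; this gives connectivity.

For the size, keep `p` at `f p` and gather free vertices one at a time into a cluster that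
induces a connected subgraph around `f p`. A free vertex outside the cluster is pulled along a
walk towards it by sliding each pebble in its way one step backwards, which never touches the
cluster. Once all `k` free vertices are gathered, `p` can tour the `k + 1` vertices of the
cluster, since every vertex it steps onto is free. -/

open Finset

section Pebbles

variable {V P : Type*} {G : SimpleGraph V}

lemma PebMove.apply_eq_or_adj {f g : P ↪ V} (h : PebMove G f g) (p : P) :
    g p = f p ∨ G.Adj (f p) (g p) := by
  obtain ⟨q, hadj, hfix, -⟩ := h
  rcases eq_or_ne p q with rfl | hpq
  · exact .inr hadj
  · exact .inl (hfix p hpq)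

lemma pebMove_setValue [DecidableEq P] [DecidableEq V] {g : P ↪ V} {q : P} {v : V}
    (hadj : G.Adj (g q) v) (hv : ∀ r, g r ≠ v) : PebMove G g (g.setValue q v) := by
  refine ⟨q, by rwa [Function.Embedding.setValue_eq], fun r hr => ?_, fun r => ?_⟩
  · exact Function.Embedding.setValue_eq_of_ne hr (hv r)
  · rw [Function.Embedding.setValue_eq]; exact hv r

lemma self_mem_reachSet (f : P ↪ V) (p : P) : f p ∈ ReachSet G f p :=
  ⟨f, .refl, rfl⟩

lemma reachSet_subset_of_pebEquiv {f g : P ↪ V} (h : PebEquiv G f g) (p : P) :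
    ReachSet G g p ⊆ ReachSet G f p := fun _ ⟨g', hg', hv⟩ => ⟨g', h.trans hg', hv⟩

lemma exists_walk_of_pebEquiv {f g : P ↪ V} (h : PebEquiv G f g) (p : P) :
    ∃ w : G.Walk (f p) (g p), ∀ x ∈ w.support, x ∈ ReachSet G f p := by
  induction h with
  | refl => exact ⟨.nil, by simpa using self_mem_reachSet f p⟩
  | @tail b c hfb hbc ih =>
    obtain ⟨w, hw⟩ := ih
    rcases hbc.apply_eq_or_adj p with hcb | hadj
    · exact ⟨w.copy rfl hcb.symm, by simpa using hw⟩
    · refine ⟨w.concat hadj, fun x hx => ?_⟩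
      rw [SimpleGraph.Walk.support_concat, List.mem_append, List.mem_singleton] at hx
      rcases hx with hx | rfl
      exacts [hw x hx, ⟨c, hfb.tail hbc, rfl⟩]

theorem reachSet_induce_connected (f : P ↪ V) (p : P) :
    (G.induce (ReachSet G f p)).Connected := by
  refine (SimpleGraph.connected_iff_exists_forall_reachable _).2
    ⟨⟨f p, self_mem_reachSet f p⟩, fun ⟨v, g, hfg, hv⟩ => ?_⟩
  obtain ⟨w, hw⟩ := exists_walk_of_pebEquiv hfg p
  subst hv
  exact (w.induce _ hw).reachable

lemma exists_unoccupied_notMem [Fintype V] [Fintype P] (g : P ↪ V) (T : Finset V)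
    (hT : #T + Fintype.card P < Fintype.card V) : ∃ v ∉ T, ∀ q, g q ≠ v := by
  classical
  have hcard : #(T ∪ univ.map g) < #(univ : Finset V) :=
    calc #(T ∪ univ.map g) ≤ #T + #(univ.map g) := card_union_le _ _
      _ < #(univ : Finset V) := by rwa [card_map, card_univ, card_univ]
  obtain ⟨v, -, hv⟩ := exists_mem_notMem_of_card_lt_card hcard
  simp only [mem_union, mem_map, mem_univ, true_and, not_or, not_exists] at hv
  exact ⟨v, hv.1, hv.2⟩

lemma exists_pebEquiv_unoccupied_adj (B : Set V) {h b : V}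
    (w : G.Walk h b) (hb : b ∈ B) (hh : h ∉ B) {g : P ↪ V} (hfree : ∀ q, g q ≠ h) :
    ∃ g' : P ↪ V, PebEquiv G g g' ∧ (∀ q, g q ∈ B ∨ g' q ∈ B → g' q = g q) ∧
      ∃ u ∉ B, (∀ q, g' q ≠ u) ∧ ∃ x ∈ B, G.Adj u x := by
  classical
  induction w generalizing g with
  | nil => exact absurd hb hh
  | @cons h c b hadj rest ih =>
    by_cases hc : c ∈ B
    · exact ⟨g, .refl, fun _ _ => rfl, h, hh, hfree, c, hc, hadj⟩
    by_cases hocc : ∃ q, g q = c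
    swap
    · exact ih hb hc (by simpa using hocc)
    obtain ⟨q, hq⟩ := hocc
    set g₁ := g.setValue q h
    have hmove : PebMove G g g₁ := pebMove_setValue (hq ▸ hadj.symm) hfree
    have hg₁ : ∀ r ≠ q, g₁ r = g r := fun r hr =>
      Function.Embedding.setValue_eq_of_ne hr (hfree r)
    have hg₁q : g₁ q = h := Function.Embedding.setValue_eq _ _ _
    have hfree₁ : ∀ r, g₁ r ≠ c := by
      intro r
      rcases eq_or_ne r q with rfl | hr
      · rw [hg₁q]; exact hadj.ne
      · rw [hg₁ r hr, ← hq]; exact g.injective.ne hr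
    obtain ⟨g', hg', hkeep, hfound⟩ := ih hb hc hfree₁
    refine ⟨g', Relation.ReflTransGen.head hmove hg', fun r hr => ?_, hfound⟩
    have hrq : r ≠ q := by
      rintro rfl
      rcases hr with hr | hr
      · exact hc (hq ▸ hr)
      · exact hh (hg₁q ▸ hkeep r (.inr hr) ▸ hr)
    rw [← hg₁ r hrq]
    exact hkeep r (hr.imp (hg₁ r hrq ▸ ·) id)

lemma exists_pebEquiv_connected_unoccupied [Fintype V] [Fintype P] (hG : G.Connected)
    (f : P ↪ V) (p : P) {j : ℕ} (hj : j + Fintype.card P ≤ Fintype.card V) :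
    ∃ g : P ↪ V, PebEquiv G f g ∧ g p = f p ∧ ∃ T : Finset V, #T = j ∧
      (∀ t ∈ T, ∀ q, g q ≠ t) ∧ (G.induce (insert (f p) (T : Set V))).Connected := by
  classical
  induction j with
  | zero =>
    refine ⟨f, .refl, rfl, ∅, rfl, by simp, ?_⟩
    rw [coe_empty, insert_empty_eq]
    exact .of_subsingleton
  | succ j ih =>
    obtain ⟨g, hfg, hgp, T, hT, hfree, hconn⟩ := ih (by omega)
    obtain ⟨h, hhT, hh⟩ := exists_unoccupied_notMem g T (by omega)
    have hhB : h ∉ insert (f p) (T : Set V) := by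
      simpa [hhT] using fun e => hh p (hgp.trans e.symm)
    obtain ⟨g', hgg', hkeep, u, huB, hu, x, hxB, hux⟩ := exists_pebEquiv_unoccupied_adj _
      (hG.preconnected h (f p)).some (by simp) hhB hh
    have huT : u ∉ T := fun hmem => huB (by simp [hmem])
    refine ⟨g', hfg.trans hgg', hgp ▸ hkeep p (.inl (by simp [hgp])), insert u T,
      by rw [card_insert_of_notMem huT, hT], fun t ht q => ?_, ?_⟩
    · rcases mem_insert.1 ht with rfl | ht
      · exact hu q
      · intro hq
        exact hfree t ht q (hkeep q (.inr (by simp [hq, ht])) ▸ hq)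
    · have := SimpleGraph.connected_induce_union hconn.preconnected
        (.of_subsingleton : (G.induce {u}).Preconnected) hxB rfl hux.symm
      rwa [Set.union_singleton, Set.insert_comm, ← coe_insert] at this

lemma subset_reachSet_of_unoccupied {C : Set V} (hC : (G.induce C).Preconnected)
    {g : P ↪ V} {p : P} (hp : g p ∈ C) (hfree : ∀ x ∈ C, x ≠ g p → ∀ q, g q ≠ x) :
    C ⊆ ReachSet G g p := by
  classical
  suffices ∀ {u w : C}, (G.induce C).Walk u w → ∀ g : P ↪ V, g p = u →
      (∀ x ∈ C, x ≠ g p → ∀ q, g q ≠ x) → (w : V) ∈ ReachSet G g p from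
    fun w hw => this (hC ⟨g p, hp⟩ ⟨w, hw⟩).some g rfl hfree
  intro u w walk
  induction walk with
  | nil => rintro g hgu -; exact hgu ▸ self_mem_reachSet g p
  | @cons u u' w hadj rest ih =>
    intro g hgu hfree
    have hadj' : G.Adj (g p) u' := hgu ▸ SimpleGraph.induce_adj.1 hadj
    have hu' : ∀ q, g q ≠ u' := hfree u' u'.2 hadj'.ne'
    set g₁ := g.setValue p u'
    have hg₁p : g₁ p = u' := Function.Embedding.setValue_eq _ _ _
    have hg₁ : ∀ q ≠ p, g₁ q = g q := fun q hq => Function.Embedding.setValue_eq_of_ne hq (hu' q)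
    refine reachSet_subset_of_pebEquiv (.single (pebMove_setValue hadj' hu')) p
      (ih g₁ hg₁p fun x hx hxu q => ?_)
    rcases eq_or_ne q p with rfl | hq
    · exact hxu.symm
    rw [hg₁ q hq]
    rcases eq_or_ne x (g p) with rfl | hxp
    · exact g.injective.ne hq
    · exact hfree x hx hxp q

theorem le_ncard_reachSet [Fintype V] [Fintype P] (hG : G.Connected) {k : ℕ}
    (hcard : Fintype.card P + k = Fintype.card V) (f : P ↪ V) (p : P) :
    k + 1 ≤ (ReachSet G f p).ncard := by
  obtain ⟨g, hfg, hgp, T, hT, hfree, hconn⟩ :=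
    exists_pebEquiv_connected_unoccupied hG f p (j := k) (by omega)
  have hfpT : f p ∉ (T : Set V) := fun h => hfree _ h p hgp
  have hsub : insert (f p) (T : Set V) ⊆ ReachSet G f p := by
    refine (subset_reachSet_of_unoccupied hconn.preconnected (hgp ▸ Set.mem_insert _ _)
      fun x hx hxp => ?_).trans (reachSet_subset_of_pebEquiv hfg p)
    exact hfree x (hx.resolve_left (hgp ▸ hxp))
  calc k + 1 = (insert (f p) (T : Set V)).ncard := by
        rw [Set.ncard_insert_of_notMem hfpT, Set.ncard_coe_finset, hT]
    _ ≤ (ReachSet G f p).ncard := Set.ncard_le_ncard hsub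

end Pebbles

theorem reachSet_connected_card_general {V P : Type*} [Fintype V] [Fintype P]
    (G : SimpleGraph V) (hG : G.Connected) (k : ℕ)
    (hcard : Fintype.card P + k = Fintype.card V)
    (f : P ↪ V) (p : P) :
    (G.induce (ReachSet G f p)).Connected ∧ k + 1 ≤ (ReachSet G f p).ncard :=
  ⟨reachSet_induce_connected f p, le_ncard_reachSet hG hcard f p⟩

/-- The reachable range of a pebble induces a connected subgraph and has at least
`k+1` vertices, where `k` is the number of unoccupied vertices. -/
theorem reachSet_connected_card {V P : Type*} [Fintype V] [Fintype P]
    (G : SimpleGraph V) (hG : G.Connected) (k : ℕ) (hk : 1 ≤ k)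
    (hm : 0 < Fintype.card P) (hcard : Fintype.card P + k = Fintype.card V)
    (f : P ↪ V) (p : P) :
    (G.induce (ReachSet G f p)).Connected ∧ k + 1 ≤ (ReachSet G f p).ncard :=
  reachSet_connected_card_general G hG k hcard f p
end
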